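/- If R is a symmetric nonnegative n×n matrix with maximum density κ and α = ‖R‖₁, then λ(R) ≤ 2√(κ(α − κ)). -/

import Mathlib

open Matrix

/-- The spectral radius of a real square matrix: the supremum of the absolute
values of its (complex) eigenvalues, i.e. of the roots of its characteristic
polynomial over `ℂ`. -/
noncomputable def specRad {n : ℕ} (R : Matrix (Fin n) (Fin n) ℝ) : ℝ :=
  sSup {r : ℝ | ∃ μ : ℂ, ((R.map (fun a => (a : ℂ))).charpoly).IsRoot μ ∧ r = ‖μ‖}

/-- The maximum absolute column sum norm `‖·‖₁`. -/
noncomputable def norm1 {m n : ℕ} (B : Matrix (Fin m) (Fin n) ℝ) : ℝ :=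
  ⨆ j, ∑ i, |B i j|

/-- The maximum absolute row sum norm `‖·‖_∞`. -/
noncomputable def normInf {m n : ℕ} (B : Matrix (Fin m) (Fin n) ℝ) : ℝ :=
  ⨆ i, ∑ j, |B i j|

/-- The maximum density of a square matrix: the maximum over nonempty subsets
`I` of `(∑_{i,j ∈ I} R i j) / (2|I|)`. -/
noncomputable def maxDensity {n : ℕ} (R : Matrix (Fin n) (Fin n) ℝ) : ℝ :=
  ⨆ I : {I : Finset (Fin n) // I.Nonempty},
    (∑ i ∈ I.1, ∑ j ∈ I.1, R i j) / (2 * I.1.card)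

/-!
Let `z` be an eigenvector for `μ` and `u = |z|`, so that `|μ| ‖u‖² ≤ ∑ R i j u i u j`. For `t ≥ 1`,
`2 u_i u_j ≤ (t - 1/t) min(u_i², u_j²) + (u_i² + u_j²) / t`. Summed against `R`, the second part
is controlled by the row and column sums `≤ α`. The first part is controlled by the density: writing
`u²` as a positive combination of indicators of its superlevel sets `I` (layer cake), the sum
`∑ R i j min(u_i², u_j²)` becomes a combination of the sums `∑_{I × I} R ≤ 2κ|I|`; this replaces the
orientation `R = B + Bᵀ` of the paper. Altogether `∑ R i j u i u j ≤ (κ t + (α - κ) / t) ‖u‖²`,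
and `2κ ≤ α` allows the optimal choice `t = √((α - κ) / κ) ≥ 1`.
-/

open Finset

lemma two_mul_mul_le_min_sq_add {t : ℝ} (ht : 0 < t) (a b : ℝ) :
    2 * (a * b) ≤ (t - t⁻¹) * min (a ^ 2) (b ^ 2) + t⁻¹ * (a ^ 2 + b ^ 2) := by
  have amgm : ∀ x y : ℝ, 2 * (x * y) ≤ t * x ^ 2 + t⁻¹ * y ^ 2 := fun x y => by
    have : t * x ^ 2 + t⁻¹ * y ^ 2 - 2 * (x * y) = t⁻¹ * (t * x - y) ^ 2 := by
      field_simp; ring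
    nlinarith [mul_nonneg (inv_nonneg.2 ht.le) (sq_nonneg (t * x - y))]
  rcases le_total (a ^ 2) (b ^ 2) with h | h
  · rw [min_eq_left h]; linarith [amgm a b]
  · rw [min_eq_right h]; linarith [amgm b a]

lemma le_two_mul_sqrt_mul_of_forall_le {x a b s : ℝ} (ha : 0 ≤ a) (hab : a ≤ b) (hs : 0 ≤ s)
    (h : ∀ t, 1 ≤ t → x ≤ (a * t + b / t) * s) : x ≤ 2 * √(a * b) * s := by
  rcases ha.eq_or_lt with rfl | ha
  · rw [zero_mul, Real.sqrt_zero, mul_zero, zero_mul]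
    by_contra! hx
    set t := b * s / x + 1
    have hxt : x * t ≤ b * s := by
      have := h t (le_add_of_nonneg_left (by positivity))
      rwa [zero_mul, zero_add, div_mul_eq_mul_div, le_div_iff₀ (by positivity)] at this
    have : x * t = b * s + x := by rw [mul_add, mul_div_cancel₀ _ hx.ne', mul_one]
    linarith
  · set r := √(a * b)
    have hr : a ≤ r := Real.le_sqrt_of_sq_le (by nlinarith)
    have hrr : r * r = a * b := Real.mul_self_sqrt (mul_nonneg ha.le (ha.le.trans hab))
    have e : a * (r / a) + b / (r / a) = 2 * r := by
      rw [mul_div_cancel₀ _ ha.ne', div_div_eq_mul_div, mul_comm b, ← hrr, mul_self_div_self]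
      ring
    simpa only [e] using h (r / a) ((one_le_div ha).2 hr)

section

variable {ι : Type*} [Fintype ι]

theorem sum_mul_min_le_of_density [DecidableEq ι] (R : Matrix ι ι ℝ)
    {κ : ℝ} (hdens : ∀ I : Finset ι, ∑ i ∈ I, ∑ j ∈ I, R i j ≤ 2 * κ * #I)
    {w : ι → ℝ} (hw : ∀ i, 0 ≤ w i) :
    ∑ i, ∑ j, R i j * min (w i) (w j) ≤ 2 * κ * ∑ i, w i := by
  suffices ∀ S : Finset ι, ∀ w : ι → ℝ, (∀ i, 0 ≤ w i) → (∀ i ∉ S, w i = 0) →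
      ∑ i, ∑ j, R i j * min (w i) (w j) ≤ 2 * κ * ∑ i, w i from
    this univ w hw (by simp)
  intro S
  induction S using Finset.strongInduction with
  | H S ih =>
  intro w hw hsupp
  rcases S.eq_empty_or_nonempty with rfl | hS
  · have : w = 0 := funext fun i => hsupp i (notMem_empty i)
    simp [this]
  -- peel off the bottom layer `(w i₀) • 𝟙_S`, where `w i₀` is the least value of `w` on `S`
  obtain ⟨i₀, hi₀, hmin⟩ := S.exists_min_image w hS
  let w' : ι → ℝ := fun i => w i - if i ∈ S then w i₀ else 0
  have hw' : ∀ i, 0 ≤ w' i := fun i => by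
    by_cases hi : i ∈ S <;> simp [w', hi, hmin, hw]
  have hsupp' : ∀ i ∉ S.erase i₀, w' i = 0 := fun i hi => by
    by_cases hi' : i ∈ S
    · obtain rfl : i = i₀ := by simpa [hi'] using hi
      simp [w', hi']
    · simp [w', hi', hsupp i hi']
  have hlayer : ∀ i j, min (w i) (w j)
      = min (w' i) (w' j) + if i ∈ S then if j ∈ S then w i₀ else 0 else 0 := fun i j => by
    by_cases hi : i ∈ S <;> by_cases hj : j ∈ S
    · simp [w', hi, hj, min_sub_sub_right]
    all_goals simp [w', hi, hj, hsupp, hw, hmin]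
  have hsplit : ∑ i, ∑ j, R i j * min (w i) (w j)
      = ∑ i, ∑ j, R i j * min (w' i) (w' j) + w i₀ * ∑ i ∈ S, ∑ j ∈ S, R i j := by
    simp only [hlayer, mul_add, sum_add_distrib, mul_ite, mul_zero]
    congr 1
    simp [mul_sum, mul_comm]
  have hsum : ∑ i, w i = ∑ i, w' i + w i₀ * #S := by
    simp [w', sum_sub_distrib, sum_ite_mem]; ring
  calc ∑ i, ∑ j, R i j * min (w i) (w j)
      = ∑ i, ∑ j, R i j * min (w' i) (w' j) + w i₀ * ∑ i ∈ S, ∑ j ∈ S, R i j := hsplit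
    _ ≤ 2 * κ * ∑ i, w' i + w i₀ * (2 * κ * #S) :=
      add_le_add (ih _ (erase_ssubset hi₀) w' hw' hsupp')
        (mul_le_mul_of_nonneg_left (hdens S) (hw i₀))
    _ = 2 * κ * ∑ i, w i := by rw [hsum]; ring

lemma sum_sum_mul_le_of_sum_le (R : Matrix ι ι ℝ) {α : ℝ} (hrow : ∀ i, ∑ j, R i j ≤ α)
    {w : ι → ℝ} (hw : ∀ i, 0 ≤ w i) : ∑ i, ∑ j, R i j * w i ≤ α * ∑ i, w i :=
  calc ∑ i, ∑ j, R i j * w i = ∑ i, (∑ j, R i j) * w i := by simp only [sum_mul]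
    _ ≤ ∑ i, α * w i := sum_le_sum fun i _ => mul_le_mul_of_nonneg_right (hrow i) (hw i)
    _ = α * ∑ i, w i := (mul_sum _ _ _).symm

theorem sum_mul_mul_le_of_density [DecidableEq ι] (R : Matrix ι ι ℝ) (hR : ∀ i j, 0 ≤ R i j)
    {κ α : ℝ} (hdens : ∀ I : Finset ι, ∑ i ∈ I, ∑ j ∈ I, R i j ≤ 2 * κ * #I)
    (hrow : ∀ i, ∑ j, R i j ≤ α) (hcol : ∀ j, ∑ i, R i j ≤ α) {t : ℝ} (ht : 1 ≤ t)
    (u : ι → ℝ) :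
    ∑ i, ∑ j, R i j * u i * u j ≤ (κ * t + (α - κ) / t) * ∑ i, u i ^ 2 := by
  have ht0 : 0 < t := one_pos.trans_le ht
  have hw : ∀ i, 0 ≤ u i ^ 2 := fun i => sq_nonneg _
  have hpt : ∀ i j, R i j * u i * u j ≤ ((t - t⁻¹) * (R i j * min (u i ^ 2) (u j ^ 2))
      + t⁻¹ * (R i j * u i ^ 2) + t⁻¹ * (R i j * u j ^ 2)) / 2 := fun i j => by
    have := mul_le_mul_of_nonneg_left (two_mul_mul_le_min_sq_add ht0 (u i) (u j)) (hR i j)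
    linarith
  have hmin := sum_mul_min_le_of_density R hdens hw
  have hrow' := sum_sum_mul_le_of_sum_le R hrow hw
  have hcol' := sum_sum_mul_le_of_sum_le Rᵀ hcol hw
  rw [sum_comm] at hcol'
  simp only [transpose_apply] at hcol'
  have hcoef : 0 ≤ t - t⁻¹ := sub_nonneg.2 (((inv_le_one₀ ht0).2 ht).trans ht)
  calc ∑ i, ∑ j, R i j * u i * u j
      ≤ ((t - t⁻¹) * ∑ i, ∑ j, R i j * min (u i ^ 2) (u j ^ 2)
        + t⁻¹ * ∑ i, ∑ j, R i j * u i ^ 2 + t⁻¹ * ∑ i, ∑ j, R i j * u j ^ 2) / 2 := by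
        simp only [mul_sum, ← sum_add_distrib, sum_div]
        exact sum_le_sum fun i _ => sum_le_sum fun j _ => hpt i j
    _ ≤ ((t - t⁻¹) * (2 * κ * ∑ i, u i ^ 2) + t⁻¹ * (α * ∑ i, u i ^ 2)
        + t⁻¹ * (α * ∑ i, u i ^ 2)) / 2 := by gcongr
    _ = (κ * t + (α - κ) / t) * ∑ i, u i ^ 2 := by ring

lemma exists_mulVec_eq_smul_of_isRoot_charpoly [DecidableEq ι] {K : Type*} [Field K]
    {A : Matrix ι ι K} {μ : K} (h : A.charpoly.IsRoot μ) : ∃ z ≠ 0, A *ᵥ z = μ • z := by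
  have : Module.End.HasEigenvalue (toLin' A) μ :=
    (Module.End.hasEigenvalue_iff_isRoot_charpoly _ _).2 (by rwa [charpoly_toLin'])
  obtain ⟨z, hz⟩ := this.exists_hasEigenvector
  exact ⟨z, hz.2, by simpa using hz.apply_eq_smul⟩

lemma norm_mul_sum_sq_le_of_mulVec_eq_smul (R : Matrix ι ι ℝ) (hR : ∀ i j, 0 ≤ R i j)
    {μ : ℂ} {z : ι → ℂ} (hz : R.map (↑) *ᵥ z = μ • z) :
    ‖μ‖ * ∑ i, ‖z i‖ ^ 2 ≤ ∑ i, ∑ j, R i j * ‖z i‖ * ‖z j‖ := by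
  rw [mul_sum]
  refine sum_le_sum fun i _ => ?_
  have hi : ‖μ‖ * ‖z i‖ ≤ ∑ j, R i j * ‖z j‖ :=
    calc ‖μ‖ * ‖z i‖ = ‖∑ j, (R i j : ℂ) * z j‖ := by
          rw [← norm_mul, ← smul_eq_mul, ← Pi.smul_apply, ← hz]; rfl
      _ ≤ ∑ j, ‖(R i j : ℂ) * z j‖ := norm_sum_le _ _
      _ = ∑ j, R i j * ‖z j‖ := by simp [abs_of_nonneg (hR i _)]
  calc ‖μ‖ * ‖z i‖ ^ 2 = ‖μ‖ * ‖z i‖ * ‖z i‖ := by ring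
    _ ≤ (∑ j, R i j * ‖z j‖) * ‖z i‖ := mul_le_mul_of_nonneg_right hi (norm_nonneg _)
    _ = ∑ j, R i j * ‖z i‖ * ‖z j‖ := by rw [sum_mul]; exact sum_congr rfl fun j _ => by ring

end

section

variable {n : ℕ} (R : Matrix (Fin n) (Fin n) ℝ)

lemma sum_abs_le_norm1 {m : ℕ} (B : Matrix (Fin m) (Fin n) ℝ) (j : Fin n) :
    ∑ i, |B i j| ≤ norm1 B :=
  le_ciSup (f := fun j => ∑ i, |B i j|) (Set.finite_range _).bddAbove j

lemma norm1_nonneg {m : ℕ} (B : Matrix (Fin m) (Fin n) ℝ) : 0 ≤ norm1 B :=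
  Real.iSup_nonneg fun _ => sum_nonneg fun _ _ => abs_nonneg _

lemma sum_sum_le_maxDensity (I : Finset (Fin n)) :
    ∑ i ∈ I, ∑ j ∈ I, R i j ≤ 2 * maxDensity R * #I := by
  rcases I.eq_empty_or_nonempty with rfl | hI
  · simp
  have hcard : (0 : ℝ) < 2 * #I := by have := hI.card_pos; positivity
  have : (∑ i ∈ I, ∑ j ∈ I, R i j) / (2 * #I) ≤ maxDensity R :=
    le_ciSup (f := fun I : {I : Finset (Fin n) // I.Nonempty} =>
      (∑ i ∈ I.1, ∑ j ∈ I.1, R i j) / (2 * I.1.card)) (Set.finite_range _).bddAbove ⟨I, hI⟩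
  rw [div_le_iff₀ hcard] at this
  linarith

variable {R}

lemma maxDensity_nonneg (hR : ∀ i j, 0 ≤ R i j) : 0 ≤ maxDensity R :=
  Real.iSup_nonneg fun _ => div_nonneg (sum_nonneg fun i _ => sum_nonneg fun j _ => hR i j)
    (by positivity)

lemma two_mul_maxDensity_le (hR : ∀ i j, 0 ≤ R i j) {α : ℝ} (hrow : ∀ i, ∑ j, R i j ≤ α)
    (hα : 0 ≤ α) : 2 * maxDensity R ≤ α := by
  suffices maxDensity R ≤ α / 2 by linarith
  refine Real.iSup_le (fun I => ?_) (by positivity)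
  rw [div_le_div_iff₀ (by have := I.2.card_pos; positivity) two_pos]
  calc (∑ i ∈ I.1, ∑ j ∈ I.1, R i j) * 2
      ≤ (∑ i ∈ I.1, α) * 2 := by
        gcongr with i
        exact (sum_le_sum_of_subset_of_nonneg (subset_univ _) fun j _ _ => hR i j).trans (hrow i)
    _ = α * (2 * #I.1) := by rw [sum_const, nsmul_eq_mul]; ring

end

/-- If `R` is symmetric nonnegative with maximum density `κ` and `α = ‖R‖₁`,
then `λ(R) ≤ 2√(κ(α - κ))`. -/
theorem specRad_le_density_bound {n : ℕ} (R : Matrix (Fin n) (Fin n) ℝ)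
    (hsymm : R.IsSymm) (hR : ∀ i j, 0 ≤ R i j) :
    specRad R ≤ 2 * Real.sqrt (maxDensity R * (norm1 R - maxDensity R)) := by
  have hcol : ∀ j, ∑ i, R i j ≤ norm1 R := fun j =>
    (sum_congr rfl fun i _ => (abs_of_nonneg (hR i j)).symm).trans_le (sum_abs_le_norm1 R j)
  have hrow : ∀ i, ∑ j, R i j ≤ norm1 R := fun i =>
    (sum_congr rfl fun j _ => (hsymm.apply i j).symm).trans_le (hcol i)
  have hdens_le : maxDensity R ≤ norm1 R - maxDensity R := by
    linarith [two_mul_maxDensity_le hR hrow (norm1_nonneg R)]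
  refine Real.sSup_le ?_ (by positivity)
  rintro _ ⟨μ, hμ, rfl⟩
  obtain ⟨z, hz0, hz⟩ := exists_mulVec_eq_smul_of_isRoot_charpoly hμ
  have hpos : 0 < ∑ i, ‖z i‖ ^ 2 := by
    obtain ⟨i, hi⟩ := Function.ne_iff.1 hz0
    exact sum_pos' (fun i _ => by positivity) ⟨i, mem_univ i, by positivity⟩
  refine le_of_mul_le_mul_right ((norm_mul_sum_sq_le_of_mulVec_eq_smul R hR hz).trans ?_) hpos
  exact le_two_mul_sqrt_mul_of_forall_le (maxDensity_nonneg hR) hdens_le hpos.le fun t ht =>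
    sum_mul_mul_le_of_density R hR (sum_sum_le_maxDensity R) hrow hcol ht _
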